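/- arXiv:1001.2500 — 3 statements merged into one kernel-verified Lean document; each statement's English description precedes it below -/
import Mathlib

section
/- Define polynomials q_s = Σ_{j=0}^{s} C(s+j, s-j) t^{2j} in ℤ[t]. Then for every n ≥ 1, Σ_{s=0}^{n-1} (-1)^{n-1-s} C(n-1, s) q_s = p_{n-1}, where p is the sequence defined by p_0 = 1, p_1 = t^2, p_{s+2} = t^2 (p_s + p_{s+1}). -/
/-!
With `m = n - 1`, the left-hand side is the iterated forward difference `Δ^m q` at `0`.
The binomial identity `C(n+2,k+2) - 2 C(n+1,k+2) + C(n,k+2) = C(n,k)` gives the three-term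
recurrence `q (s+2) - 2 q (s+1) + q s = t² q (s+1)`, i.e. `Δ² q = t² • q (· + 1)`. Since
`Δ^k q 1 = Δ^k q 0 + Δ^(k+1) q 0`, the numbers `d k = Δ^k q 0` then satisfy
`d (k+2) = t² (d k + d (k+1))`, with `d 0 = 1` and `d 1 = t²`: these are the recurrence and
initial values of `p`.
-/

open Polynomial Finset fwdDiff

theorem Nat.choose_add_two_add_choose (n k : ℕ) :
    (n + 2).choose (k + 2) + n.choose (k + 2) = 2 * (n + 1).choose (k + 2) + n.choose k := by
  have h₁ : (n + 2).choose (k + 2) = (n + 1).choose (k + 1) + (n + 1).choose (k + 2) :=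
    Nat.choose_succ_succ' _ _
  have h₂ : (n + 1).choose (k + 1) = n.choose k + n.choose (k + 1) := Nat.choose_succ_succ' _ _
  have h₃ : (n + 1).choose (k + 2) = n.choose (k + 1) + n.choose (k + 2) :=
    Nat.choose_succ_succ' _ _
  omega

/-- The Morgan–Voyce polynomial `b_s`; the polynomial `q_s` of the statement is `b_s(t²)`. -/
noncomputable def morganVoyce (s : ℕ) : ℤ[X] :=
  ∑ j ∈ range (s + 1), C ((s + j).choose (2 * j) : ℤ) * X ^ j

theorem coeff_morganVoyce (s j : ℕ) : (morganVoyce s).coeff j = (s + j).choose (2 * j) := by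
  simp only [morganVoyce, finsetSum_coeff, coeff_C_mul_X_pow, sum_ite_eq, mem_range]
  split_ifs with hj
  · rfl
  · rw [Nat.choose_eq_zero_of_lt (by omega), Nat.cast_zero]

theorem morganVoyce_add_two (s : ℕ) :
    morganVoyce (s + 2) + morganVoyce s = (2 + X) * morganVoyce (s + 1) := by
  ext (_ | j)
  · simp [add_mul, coeff_morganVoyce]
  · simp only [coeff_add, coeff_morganVoyce, add_mul, coeff_ofNat_mul, coeff_X_mul]
    rw [show s + 2 + (j + 1) = s + 1 + j + 2 by ring, show s + (j + 1) = s + 1 + j by ring,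
      show s + 1 + (j + 1) = s + 1 + j + 1 by ring, show 2 * (j + 1) = 2 * j + 2 by ring]
    exact_mod_cast Nat.choose_add_two_add_choose (s + 1 + j) (2 * j)

theorem expand_morganVoyce (s : ℕ) :
    expand ℤ 2 (morganVoyce s) =
      ∑ j ∈ range (s + 1), C ((s + j).choose (s - j) : ℤ) * X ^ (2 * j) := by
  simp only [morganVoyce, map_sum, map_mul, expand_C, map_pow, expand_X, ← pow_mul]
  refine sum_congr rfl fun j hj => ?_
  rw [mem_range] at hj
  rw [Nat.choose_symm_of_eq_add (a := 2 * j) (b := s - j) (by omega)]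

section

variable {M G R : Type*} [AddCommMonoid M] [AddCommGroup G] [Monoid R] [DistribMulAction R G]

theorem fwdDiff_iter_add_two_apply {h : M} {f : M → G} {c : R}
    (hf : Δ_[h] ^[2] f = c • fun x ↦ f (x + h)) (k : ℕ) (y : M) :
    Δ_[h] ^[k + 2] f y = c • (Δ_[h] ^[k] f y + Δ_[h] ^[k + 1] f y) := by
  rw [Function.iterate_add_apply, hf, fwdDiff_iter_const_smul, Pi.smul_apply,
    fwdDiff_iter_comp_add, Function.iterate_succ_apply', fwdDiff, add_sub_cancel]

end

theorem stmt_1 (p q : ℕ → Polynomial ℤ)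
    (hp0 : p 0 = 1) (hp1 : p 1 = X ^ 2)
    (hrec : ∀ s, p (s + 2) = X ^ 2 * (p s + p (s + 1)))
    (hq : ∀ s, q s = ∑ j ∈ Finset.range (s + 1),
      C (((s + j).choose (s - j) : ℤ)) * X ^ (2 * j))
    (n : ℕ) (hn : 1 ≤ n) :
    ∑ s ∈ Finset.range n, (-1 : Polynomial ℤ) ^ (n - 1 - s) *
      C (((n - 1).choose s : ℤ)) * q s = p (n - 1) := by
  obtain ⟨m, rfl⟩ := Nat.exists_eq_add_of_le' hn
  have hq_rec (s : ℕ) : q (s + 2) + q s = (2 + X ^ 2) * q (s + 1) := by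
    simpa only [expand_morganVoyce, ← hq, map_add, map_mul, map_ofNat, expand_X]
      using congrArg (expand ℤ 2) (morganVoyce_add_two s)
  have hΔ2 : Δ_[1] ^[2] q = (X ^ 2 : ℤ[X]) • fun s ↦ q (s + 1) := by
    funext s
    show q (s + 2) - q (s + 1) - (q (s + 1) - q s) = X ^ 2 * q (s + 1)
    linear_combination hq_rec s
  have hdiff : ∀ k, Δ_[1] ^[k] q 0 = p k := by
    refine Nat.twoStepInduction ?_ ?_ fun k ih₀ ih₁ ↦ ?_
    · simp [hp0, hq]
    · simp [hp1, hq, fwdDiff, sum_range_succ]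
    · rw [fwdDiff_iter_add_two_apply hΔ2, ih₀, ih₁, hrec, smul_eq_mul]
  rw [Nat.add_sub_cancel, ← hdiff, fwdDiff_iter_eq_sum_shift]
  refine sum_congr rfl fun s _ ↦ ?_
  simp [zsmul_eq_mul]
end

section
/- For all integers n ≥ 1 and 0 ≤ j ≤ n-1, Σ_{s=j}^{n-1} (-1)^s C(n-1, s) C(s+j, 2j) = (-1)^{n-1} C(j, 2j-n+1). -/
/-!
The sum is, up to the sign `(-1)^(n-1)`, the `(n-1)`-st forward difference at `0` of
`s ↦ C(s + j, 2j)`. Each difference lowers the lower index of a binomial coefficient by one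
(Pascal's rule), so the `m`-th difference of `x ↦ C(x, b)` is `x ↦ C(x, b - m)` for `m ≤ b`
and vanishes for `m > b`. The terms with `s < j` vanish, which extends the sum to `0 ≤ s ≤ n-1`.
-/

open Finset fwdDiff

theorem fwdDiff_iter_choose_apply (m b x : ℕ) :
    Δ_[1] ^[m] (fun x ↦ x.choose b : ℕ → ℤ) x = if m ≤ b then (x.choose (b - m) : ℤ) else 0 := by
  split_ifs with hmb
  · obtain ⟨k, rfl⟩ := Nat.exists_eq_add_of_le hmb
    rw [Nat.add_sub_cancel_left, fwdDiff_iter_choose]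
  · obtain ⟨k, rfl⟩ := Nat.exists_eq_add_of_lt (not_le.mp hmb)
    have hconst : Δ_[1] ^[b] (fun x ↦ x.choose b : ℕ → ℤ) = fun _ ↦ 1 := by
      simpa using fwdDiff_iter_choose 0 b
    rw [add_assoc, add_comm, Function.iterate_add_apply, Function.iterate_succ_apply, hconst,
      fwdDiff_const, Function.iterate_fixed (fwdDiff_const 1 0)]

theorem alternating_sum_choose_mul_choose_add (m r b : ℕ) :
    ∑ s ∈ range (m + 1), (-1 : ℤ) ^ s * (m.choose s : ℤ) * ((s + r).choose b : ℤ) =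
      (-1 : ℤ) ^ m * (if m ≤ b then (r.choose (b - m) : ℤ) else 0) := by
  have hdiff := fwdDiff_iter_eq_sum_shift 1 (fun x ↦ (x.choose b : ℤ)) m r
  rw [fwdDiff_iter_choose_apply] at hdiff
  rw [hdiff, mul_sum]
  refine sum_congr rfl fun s hs ↦ ?_
  have hsign : (-1 : ℤ) ^ m = (-1) ^ (m - s) * (-1) ^ s := by
    rw [← pow_add, Nat.sub_add_cancel (Nat.lt_succ_iff.mp (mem_range.mp hs))]
  rw [hsign, smul_eq_mul, smul_eq_mul, mul_one, add_comm r s]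
  have hsq : ((-1 : ℤ) ^ (m - s)) ^ 2 = 1 := by rw [← pow_mul, pow_mul', neg_one_sq, one_pow]
  linear_combination (-(-1 : ℤ) ^ s * (m.choose s) * ((s + r).choose b)) * hsq

theorem stmt_2_general (n j : ℕ) :
    ∑ s ∈ Finset.Icc j (n - 1),
      (-1 : ℤ) ^ s * ((n - 1).choose s : ℤ) * ((s + j).choose (2 * j) : ℤ) =
    (-1 : ℤ) ^ (n - 1) *
      (if n - 1 ≤ 2 * j then (j.choose (2 * j - (n - 1)) : ℤ) else 0) := by
  rw [← alternating_sum_choose_mul_choose_add]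
  refine sum_subset (fun s hs ↦ by grind) fun s hs hsj ↦ ?_
  have hsmall : s + j < 2 * j := by grind
  simp [Nat.choose_eq_zero_of_lt hsmall]

theorem stmt_2 (n j : ℕ) (hn : 1 ≤ n) (hj : j ≤ n - 1) :
    ∑ s ∈ Finset.Icc j (n - 1),
      (-1 : ℤ) ^ s * ((n - 1).choose s : ℤ) * ((s + j).choose (2 * j) : ℤ) =
    (-1 : ℤ) ^ (n - 1) *
      (if n - 1 ≤ 2 * j then (j.choose (2 * j - (n - 1)) : ℤ) else 0) :=
  stmt_2_general n j
end

section
/- In the free group F on generators x and y, consider the Magnus expansion μ into the ring of formal power series in non-commuting variables s, t defined by x ↦ 1+s, y ↦ 1+t, x^{-1} ↦ 1 - s + s^2 - ..., y^{-1} ↦ 1 - t + t^2 - .... Then μ is an injective group homomorphism from F into the group of units of ℤ⟨⟨s,t⟩⟩. -/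
/-!
A nontrivial element of the free group is a reduced word `x_{i₁}^{e₁} ⋯ x_{i_k}^{e_k}` with all
`e_j ≠ 0` and `i_j ≠ i_{j+1}`. The image of `x_i^e` is a power series in the single variable
`s_i` with linear coefficient `e`, so the degree `k` part of the image of the word is a sum of
terms `c · s_{i₁}^{a₁} ⋯ s_{i_k}^{a_k}` with `a₁ + ⋯ + a_k = k`. Since consecutive `i_j` differ,
such a monomial equals `s_{i₁} ⋯ s_{i_k}` only when every `a_j = 1`; hence the coefficient of
`s_{i₁} ⋯ s_{i_k}` in the image is `e₁ ⋯ e_k ≠ 0`, and the image is not `1`.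
-/

/-- The free associative algebra ℤ⟨s,t⟩ on two non-commuting variables,
realized as the monoid algebra of the free monoid on two generators. -/
noncomputable abbrev FreeAlg2 : Type := MonoidAlgebra ℤ (FreeMonoid (Fin 2))

/-- The ring ℤ⟨⟨s,t⟩⟩ of formal power series in two non-commuting variables,
realized (via the grading by total degree) inside power series with
coefficients in ℤ⟨s,t⟩: the generator `s` corresponds to `gen 0` and `t`
to `gen 1`, each placed in degree one. -/
noncomputable abbrev NCSeries2 : Type := PowerSeries FreeAlg2

/-- The degree-one series corresponding to the non-commuting variable `i`. -/
noncomputable def gen (i : Fin 2) : NCSeries2 :=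
  PowerSeries.C (R := FreeAlg2) (MonoidAlgebra.single (FreeMonoid.of i) (1 : ℤ)) *
    PowerSeries.X

namespace FreeMonoid

variable {α : Type*}

theorem toList_of_pow (x : α) (a : ℕ) : (of x ^ a).toList = List.replicate a x := by
  induction a with
  | zero => rfl
  | succ a ih => rw [pow_succ', toList_of_mul, ih, List.replicate_succ]

theorem length_of_pow (x : α) (a : ℕ) : (of x ^ a).length = a := by
  rw [length, toList_of_pow, List.length_replicate]

theorem length_ofList (l : List α) : (ofList l).length = l.length :=
  rfl

theorem le_one_and_isChain_ne_of_pow_mul {x : α} {a : ℕ} {v : FreeMonoid α}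
    (h : (of x ^ a * v).toList.IsChain (· ≠ ·)) : a ≤ 1 ∧ v.toList.IsChain (· ≠ ·) := by
  rw [toList_mul, toList_of_pow] at h
  refine ⟨?_, (List.isChain_append.1 h).2.1⟩
  match a, h with
  | 0, _ | 1, _ => omega
  | a + 2, h =>
    rw [List.replicate_succ, List.replicate_succ, List.cons_append, List.cons_append,
      List.isChain_cons_cons] at h
    exact absurd rfl h.1

end FreeMonoid

namespace MonoidAlgebra

theorem exists_eq_mul_of_coeff_single_mul_ne_zero {R M : Type*} [Semiring R] [Monoid M]
    {m w : M} {r : R} {x : MonoidAlgebra R M} (h : (single m r * x).coeff w ≠ 0) :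
    ∃ v, w = m * v ∧ x.coeff v ≠ 0 := by
  classical
  obtain ⟨v, hv, rfl⟩ := Finset.mem_image.1 <|
    support_coeff_single_mul_subset x r m (Finsupp.mem_support_iff.2 h)
  exact ⟨v, rfl, Finsupp.mem_support_iff.1 hv⟩

end MonoidAlgebra

namespace PowerSeries

theorem coeff_one_zpow {R : Type*} [CommRing R] (U : R⟦X⟧ˣ)
    (hU : constantCoeff (U : R⟦X⟧) = 1) (n : ℤ) :
    coeff 1 ((U ^ n : R⟦X⟧ˣ) : R⟦X⟧) = n * coeff 1 (U : R⟦X⟧) := by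
  have hU' : Units.map constantCoeff.toMonoidHom U = 1 := Units.ext hU
  have hcc (m : ℤ) : constantCoeff ((U ^ m : R⟦X⟧ˣ) : R⟦X⟧) = 1 :=
    congrArg Units.val ((map_zpow _ U m).trans (by rw [hU', one_zpow]))
  have hstep (m : ℤ) : coeff 1 ((U ^ (m + 1) : R⟦X⟧ˣ) : R⟦X⟧) =
      coeff 1 ((U ^ m : R⟦X⟧ˣ) : R⟦X⟧) + coeff 1 (U : R⟦X⟧) := by
    rw [zpow_add_one, Units.val_mul, coeff_one_mul, hU, hcc, mul_one, mul_one]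
  induction n using Int.induction_on with
  | zero => simp
  | succ m ih => rw [hstep, ih]; push_cast; ring
  | pred m ih =>
    have := hstep (-(m : ℤ) - 1)
    rw [sub_add_cancel, ih] at this
    push_cast at this ⊢
    linear_combination -this

end PowerSeries

namespace Magnus

open PowerSeries

section OneVariable

variable {R : Type*} [CommRing R]

noncomputable def oneAddX : R⟦X⟧ˣ :=
  (isUnit_iff_constantCoeff.2 (by simp) : IsUnit (1 + X : R⟦X⟧)).unit

theorem coe_oneAddX : ((oneAddX : R⟦X⟧ˣ) : R⟦X⟧) = 1 + X :=
  IsUnit.unit_spec _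

theorem coeff_one_lift_oneAddX (g : FreeGroup Unit) :
    coeff 1 (FreeGroup.lift (fun _ => (oneAddX : R⟦X⟧ˣ)) g : R⟦X⟧) =
      FreeGroup.freeGroupUnitEquivInt g := by
  obtain ⟨n, rfl⟩ := FreeGroup.freeGroupUnitEquivInt.symm.surjective g
  rw [Equiv.apply_symm_apply]
  change coeff 1 ((FreeGroup.lift _ (FreeGroup.of () ^ n) : R⟦X⟧ˣ) : R⟦X⟧) = n
  rw [map_zpow, FreeGroup.lift_apply_of, coeff_one_zpow _ (by simp [coe_oneAddX])]
  simp [coe_oneAddX]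

end OneVariable

section Substitution

variable {ι R : Type*} [CommSemiring R]

/-- `f(X) ↦ f(s_i X)`, which in the grading by total degree is the substitution `X ↦ s_i`. -/
noncomputable def substVar (i : ι) :
    R⟦X⟧ →+* PowerSeries (MonoidAlgebra R (FreeMonoid ι)) :=
  (map (Polynomial.aeval (MonoidAlgebra.of R (FreeMonoid ι) (FreeMonoid.of i))).toRingHom).comp
    ((rescale Polynomial.X).comp (map Polynomial.C))

theorem coeff_substVar (i : ι) (f : R⟦X⟧) (n : ℕ) :
    coeff n (substVar i f) = MonoidAlgebra.single (FreeMonoid.of i ^ n) (coeff n f) := by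
  simp [substVar, coeff_rescale, MonoidAlgebra.single_pow]

theorem substVar_X (i : ι) :
    substVar i (X : R⟦X⟧) = C (MonoidAlgebra.single (FreeMonoid.of i) 1) * X := by
  ext n
  rw [coeff_substVar, coeff_C_mul, coeff_X, coeff_X]
  split_ifs with h <;> simp [h]

theorem exists_eq_pow_mul_of_coeff_substVar_mul_ne_zero {i : ι} {f : R⟦X⟧}
    {Q : PowerSeries (MonoidAlgebra R (FreeMonoid ι))} {a b : ℕ} {w : FreeMonoid ι}
    (h : (coeff a (substVar i f) * coeff b Q).coeff w ≠ 0) :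
    ∃ v, w = FreeMonoid.of i ^ a * v ∧ (coeff b Q).coeff v ≠ 0 := by
  rw [coeff_substVar] at h
  exact MonoidAlgebra.exists_eq_mul_of_coeff_single_mul_ne_zero h

theorem length_le_of_coeff_prod_substVar_ne_zero (L : List (ι × R⟦X⟧)) {n : ℕ}
    {w : FreeMonoid ι} (hw : w.toList.IsChain (· ≠ ·))
    (h : (coeff n (L.map fun p => substVar p.1 p.2).prod).coeff w ≠ 0) :
    w.length ≤ L.length := by
  induction L generalizing n w with
  | nil =>
    have hw1 : w = 1 := by
      by_contra hne
      refine h ?_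
      rw [List.map_nil, List.prod_nil, coeff_one]
      split_ifs <;> simp [MonoidAlgebra.one_def, Ne.symm hne]
    simp [hw1]
  | cons p L ih =>
    rw [List.map_cons, List.prod_cons, coeff_mul, MonoidAlgebra.coeff_sum,
      Finsupp.finsetSum_apply] at h
    obtain ⟨⟨a, b⟩, -, hab⟩ := Finset.exists_ne_zero_of_sum_ne_zero h
    obtain ⟨v, rfl, hv⟩ := exists_eq_pow_mul_of_coeff_substVar_mul_ne_zero hab
    obtain ⟨ha, hv'⟩ := FreeMonoid.le_one_and_isChain_ne_of_pow_mul hw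
    rw [FreeMonoid.length_mul, FreeMonoid.length_of_pow, List.length_cons]
    have := ih hv' hv
    omega

theorem coeff_prod_substVar (L : List (ι × R⟦X⟧)) (hL : L.IsChain fun p q => p.1 ≠ q.1) :
    (coeff L.length (L.map fun p => substVar p.1 p.2).prod).coeff
        (FreeMonoid.ofList (L.map Prod.fst)) =
      (L.map fun p => coeff 1 p.2).prod := by
  induction L with
  | nil => simp [MonoidAlgebra.one_def]
  | cons p L ih =>
    have hw : (FreeMonoid.ofList ((p :: L).map Prod.fst)).toList.IsChain (· ≠ ·) :=
      List.isChain_map _ |>.2 hL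
    rw [List.map_cons, List.prod_cons, coeff_mul, MonoidAlgebra.coeff_sum,
      Finsupp.finsetSum_apply, Finset.sum_eq_single_of_mem (1, L.length) (by simp [add_comm])]
    · rw [coeff_substVar, pow_one, List.map_cons, FreeMonoid.ofList_cons,
        MonoidAlgebra.coeff_single_mul_mul, ih hL.tail, List.map_cons, List.prod_cons]
    · rintro ⟨a, b⟩ hab hne
      by_contra h
      obtain ⟨v, hv, hv0⟩ := exists_eq_pow_mul_of_coeff_substVar_mul_ne_zero h
      rw [hv] at hw
      obtain ⟨ha, hv'⟩ := FreeMonoid.le_one_and_isChain_ne_of_pow_mul hw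
      have hlen := length_le_of_coeff_prod_substVar_ne_zero L hv' hv0
      have hwlen : L.length + 1 = a + v.length := by
        simpa [FreeMonoid.length_mul, FreeMonoid.length_of_pow, FreeMonoid.length_ofList,
          add_comm] using congrArg FreeMonoid.length hv
      rw [Finset.HasAntidiagonal.mem_antidiagonal, List.length_cons] at hab
      exact hne (Prod.ext (by omega) (by omega))

end Substitution

section FreeProduct

variable {ι R : Type*} [CommRing R]

noncomputable def magnusCoprod :
    (Monoid.CoprodI fun _ : ι => FreeGroup Unit) →*
      (PowerSeries (MonoidAlgebra R (FreeMonoid ι)))ˣ :=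
  Monoid.CoprodI.lift fun i =>
    (Units.map (substVar i).toMonoidHom).comp (FreeGroup.lift fun _ => oneAddX)

theorem coe_magnusCoprod_word_prod (w : Monoid.CoprodI.Word fun _ : ι => FreeGroup Unit) :
    ((magnusCoprod w.prod : (PowerSeries (MonoidAlgebra R (FreeMonoid ι)))ˣ) :
      PowerSeries (MonoidAlgebra R (FreeMonoid ι))) =
      (w.toList.map fun l =>
        substVar l.1 (FreeGroup.lift (fun _ => oneAddX) l.2 : R⟦X⟧ˣ)).prod := by
  rw [← Units.coeHom_apply, Monoid.CoprodI.Word.prod, map_list_prod, map_list_prod,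
    List.map_map, List.map_map]
  simp [magnusCoprod, Function.comp_def]

theorem magnusCoprod_injective [IsDomain R] [CharZero R] :
    Function.Injective (magnusCoprod (ι := ι) (R := R)) := by
  classical
  rw [injective_iff_map_eq_one]
  intro g hg
  obtain ⟨w, rfl⟩ : ∃ w : Monoid.CoprodI.Word _, w.prod = g :=
    ⟨Monoid.CoprodI.Word.equiv g, Monoid.CoprodI.Word.equiv.symm_apply_apply g⟩
  suffices hw : w.toList = [] by simp [Monoid.CoprodI.Word.prod, hw]
  by_contra hw
  set L := w.toList.map fun l =>
    (l.1, ((FreeGroup.lift (fun _ => oneAddX) l.2 : R⟦X⟧ˣ) : R⟦X⟧))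
  have hcoeff := coeff_prod_substVar L (List.isChain_map _ |>.2 w.chain_ne)
  rw [List.map_map, Function.comp_def, ← coe_magnusCoprod_word_prod, hg, Units.val_one,
    coeff_one, if_neg (by simpa [L] using hw)] at hcoeff
  refine List.prod_ne_zero (fun h0 => ?_) hcoeff.symm
  obtain ⟨i, g, hl, hg0⟩ := by simpa [L] using h0
  rw [coeff_one_lift_oneAddX, Int.cast_eq_zero] at hg0
  exact w.ne_one _ hl (FreeGroup.freeGroupUnitEquivInt.injective (hg0.trans rfl))

end FreeProduct

end Magnus

open Magnus in
/-- Magnus embedding: any group homomorphism from the free group on two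
generators into the units of ℤ⟨⟨s,t⟩⟩ sending the generators `x, y` to
`1 + s` and `1 + t` respectively is injective. -/
theorem stmt_9 (φ : FreeGroup (Fin 2) →* NCSeries2ˣ)
    (hφ : ∀ i : Fin 2, (φ (FreeGroup.of i) : NCSeries2) = 1 + gen i) :
    Function.Injective φ := by
  have hφ' : φ = magnusCoprod.comp freeGroupEquivCoprodI.toMonoidHom := by
    ext i
    simp [hφ, magnusCoprod, coe_oneAddX, substVar_X, gen]
  rw [hφ']
  exact magnusCoprod_injective.comp freeGroupEquivCoprodI.injective
end
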